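/- Let H₁,...,Hₙ be commuting orthogonal projections, A a bounded operator, and E_S the conjugation average over S ⊆ {1,...,n}. Then for any r ∈ S, ‖A − E_S(A)‖ ≤ ‖A − E_{S∖{r}}(A)‖ + ‖A − E_{{r}}(A)‖, and consequently ‖A − E_S(A)‖ ≤ Σ_{r∈S} ‖A − E_{{r}}(A)‖ ≤ π Σ_{r∈S} ‖[Hᵣ, A]‖. -/

import Mathlib

open NormedSpace

variable {E : Type*} [NormedAddCommGroup E] [InnerProductSpace ℂ E] [CompleteSpace E]

/-- The average of `A` over conjugation by `e^{iθH}`, `θ` uniform on `[0, 2π]`. -/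
noncomputable def conjAvg (H A : E →L[ℂ] E) : E →L[ℂ] E :=
  (1 / (2 * Real.pi)) • ∫ θ in (0:ℝ)..(2 * Real.pi),
    exp (((θ : ℂ) * Complex.I) • H) * A * star (exp (((θ : ℂ) * Complex.I) • H))

/-- Iterated conjugation average `E_S` over the projections `H r`, `r ∈ S`. -/
noncomputable def conjAvgOver {n : ℕ} (H : Fin n → (E →L[ℂ] E)) (S : Finset (Fin n))
    (A : E →L[ℂ] E) : E →L[ℂ] E :=
  (S.sort (· ≤ ·)).foldr (fun r B => conjAvg (H r) B) A

/-!
For an orthogonal projection `P`, `exp (iθ P) = (1 - P) + e^{iθ} P`, so conjugating by it and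
averaging over `θ` kills the off-diagonal blocks `e^{±iθ} P A (1 - P)`, `(1 - P) A P` and leaves
the pinching `(1 - P) A (1 - P) + P A P = (A + U A U) / 2`, where `U = 1 - 2P` is a self-adjoint
unitary. Hence each single-site average is a contraction and `A - E_{r}(A) = [P, A] U` has norm
exactly `‖[P, A]‖ ≤ π ‖[P, A]‖`. Pinchings by commuting projections commute, so
`E_S = E_{r} ∘ E_{S∖{r}}`; then `A - E_S(A) = (A - E_{r}(A)) + E_{r}(A - E_{S∖{r}}(A))` and the
contraction property give the subadditivity, which iterates to the sum bound.
-/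

open scoped Nat

theorem IsIdempotentElem.exp_smul {𝕂 𝔸 : Type*} [RCLike 𝕂] [NormedRing 𝔸] [NormedAlgebra 𝕂 𝔸]
    [CompleteSpace 𝔸] {P : 𝔸} (hP : IsIdempotentElem P) (z : 𝕂) :
    exp (z • P) = (1 - P) + exp z • P := by
  have hterm : ∀ n : ℕ, (n !⁻¹ : 𝕂) • (z • P) ^ n
      = (if n = 0 then 1 - P else 0) + ((n !⁻¹ : 𝕂) • z ^ n) • P := by
    rintro (_ | n)
    · simp
    · rw [smul_pow, hP.pow_succ_eq, smul_smul, if_neg n.succ_ne_zero, zero_add, smul_eq_mul]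
  have hsum := (hasSum_ite_eq 0 (1 - P)).add ((exp_series_hasSum_exp' (𝕂 := 𝕂) z).smul_const P)
  simp_rw [← hterm] at hsum
  exact (exp_series_hasSum_exp' (𝕂 := 𝕂) (z • P)).unique hsum

section Pinching

variable {R : Type*} [Ring R] {P Q : R}

def pinching (P A : R) : R := (1 - P) * A * (1 - P) + P * A * P

lemma pinching_sub (P A B : R) : pinching P (A - B) = pinching P A - pinching P B := by
  simp only [pinching, mul_sub, sub_mul]
  abel

lemma IsIdempotentElem.sub_pinching (hP : IsIdempotentElem P) (A : R) :
    A - pinching P A = (P * A - A * P) * (1 - 2 * P) := by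
  have hPP : P * P = P := hP.eq
  simp only [pinching, mul_sub, sub_mul, mul_one, one_mul, mul_assoc, hPP, two_mul, mul_add]
  simp only [← mul_assoc]
  abel

lemma pinching_add_pinching (P A : R) :
    pinching P A + pinching P A = A + (1 - 2 * P) * A * (1 - 2 * P) := by
  simp only [pinching, mul_sub, sub_mul, mul_one, one_mul, two_mul, mul_add, add_mul]
  abel

lemma Commute.pinching_pinching (h : Commute P Q) (A : R) :
    pinching P (pinching Q A) = pinching Q (pinching P A) := by
  have hPQ' : Commute P (1 - Q) := (Commute.one_right P).sub_right h
  have hP'Q : Commute (1 - P) Q := (Commute.one_left Q).sub_left h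
  have hP'Q' : Commute (1 - P) (1 - Q) := (Commute.one_left (1 - Q)).sub_left hPQ'
  have hswap {X Y : R} (hXY : Commute X Y) : X * (Y * A * Y) * X = Y * (X * A * X) * Y := by
    simp only [← mul_assoc, hXY.eq]
    simp only [mul_assoc, hXY.eq]
  simp only [pinching, mul_add, add_mul]
  rw [hswap h, hswap hPQ', hswap hP'Q, hswap hP'Q']
  abel

lemma IsStarProjection.one_sub_two_mul_mem_unitary [StarRing R] (hP : IsStarProjection P) :
    1 - 2 * P ∈ unitary R := by
  have hU : IsSelfAdjoint (1 - 2 * P) := by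
    rw [two_mul]
    exact (IsSelfAdjoint.one R).sub (hP.isSelfAdjoint.add hP.isSelfAdjoint)
  have hUU : (1 - 2 * P) * (1 - 2 * P) = 1 := by
    have hPP : P * P = P := hP.isIdempotentElem.eq
    simp only [mul_sub, sub_mul, mul_one, one_mul, two_mul, mul_add, add_mul, hPP]
    abel
  rw [Unitary.mem_iff, hU.star_eq]
  exact ⟨hUU, hUU⟩

end Pinching

section CStarRing

variable {R : Type*} [NormedRing R] [StarRing R] [CStarRing R] {P : R}

lemma IsStarProjection.norm_sub_pinching (hP : IsStarProjection P) (A : R) :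
    ‖A - pinching P A‖ = ‖P * A - A * P‖ := by
  rw [hP.isIdempotentElem.sub_pinching,
    CStarRing.norm_mul_mem_unitary _ hP.one_sub_two_mul_mem_unitary]

lemma IsStarProjection.norm_pinching_le [NormedSpace ℝ R] (hP : IsStarProjection P) (A : R) :
    ‖pinching P A‖ ≤ ‖A‖ := by
  have hU := hP.one_sub_two_mul_mem_unitary
  have : ‖pinching P A + pinching P A‖ ≤ ‖A‖ + ‖A‖ := by
    rw [pinching_add_pinching]
    refine (norm_add_le _ _).trans (add_le_add_right ?_ _)
    rw [CStarRing.norm_mul_mem_unitary _ hU, CStarRing.norm_mem_unitary_mul _ hU]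
  rw [← two_smul ℝ, norm_smul, Real.norm_two] at this
  linarith

end CStarRing

open Complex in
lemma integral_exp_mul_I_zero_two_pi : ∫ θ in (0:ℝ)..2 * Real.pi, Complex.exp (θ * I) = 0 := by
  simp_rw [mul_comm _ I]
  rw [integral_exp_mul_complex I_ne_zero]
  push_cast
  rw [show I * (2 * Real.pi) = 2 * Real.pi * I by ring, exp_two_pi_mul_I]
  simp

open ComplexConjugate in
lemma conjAvg_eq_pinching {H : E →L[ℂ] E} (hH : IsStarProjection H) (A : E →L[ℂ] E) :
    conjAvg H A = pinching H A := by
  set e : ℝ → ℂ := fun θ => Complex.exp (θ * Complex.I)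
  have hexp (θ : ℝ) : exp (((θ : ℂ) * Complex.I) • H) = (1 - H) + e θ • H := by
    rw [hH.isIdempotentElem.exp_smul, ← Complex.exp_eq_exp_ℂ]
  have hstar (θ : ℝ) : star (exp (((θ : ℂ) * Complex.I) • H)) = (1 - H) + conj (e θ) • H := by
    rw [hexp, star_add, star_sub, star_one, star_smul, hH.isSelfAdjoint.star_eq]
    rfl
  have hnorm (θ : ℝ) : conj (e θ) * e θ = 1 := by
    rw [Complex.conj_mul', Complex.norm_exp_ofReal_mul_I]; simp
  have hintegrand (θ : ℝ) :
      exp (((θ : ℂ) * Complex.I) • H) * A * star (exp (((θ : ℂ) * Complex.I) • H))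
        = pinching H A + e θ • (H * A * (1 - H)) + conj (e θ) • ((1 - H) * A * H) := by
    rw [hstar, hexp]
    simp only [pinching, add_mul, mul_add, smul_add, smul_mul_assoc, mul_smul_comm, smul_smul,
      hnorm, one_smul]
    abel
  have hconj : ∫ θ in (0:ℝ)..2 * Real.pi, conj (e θ) = 0 := by
    rw [intervalIntegral.intervalIntegral_conj, integral_exp_mul_I_zero_two_pi, map_zero]
  simp_rw [conjAvg, hintegrand]
  rw [intervalIntegral.integral_add, intervalIntegral.integral_add,
    intervalIntegral.integral_smul_const, intervalIntegral.integral_smul_const,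
    integral_exp_mul_I_zero_two_pi, hconj, intervalIntegral.integral_const]
  · simp only [zero_smul, add_zero, sub_zero, smul_smul]
    rw [one_div, inv_mul_cancel₀ (by positivity), one_smul]
  all_goals exact Continuous.intervalIntegrable (by fun_prop) _ _

section conjAvgOver

variable {n : ℕ} {H : Fin n → (E →L[ℂ] E)}

lemma conjAvgOver_singleton (hH : ∀ j, IsStarProjection (H j)) (r : Fin n) (A : E →L[ℂ] E) :
    conjAvgOver H {r} A = pinching (H r) A := by
  simp [conjAvgOver, conjAvg_eq_pinching (hH r)]

lemma conjAvgOver_insert (hH : ∀ j, IsStarProjection (H j)) (hcomm : ∀ i j, Commute (H i) (H j))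
    {r : Fin n} {S : Finset (Fin n)} (hr : r ∉ S) (A : E →L[ℂ] E) :
    conjAvgOver H (insert r S) A = pinching (H r) (conjAvgOver H S A) := by
  have hfold (i : Fin n) (B : E →L[ℂ] E) : conjAvg (H i) B = pinching (H i) B :=
    conjAvg_eq_pinching (hH i) B
  have : LeftCommutative (fun (i : Fin n) (B : E →L[ℂ] E) => conjAvg (H i) B) :=
    ⟨fun i j B => by simp only [hfold, (hcomm i j).pinching_pinching]⟩
  have hperm : ((insert r S).sort (· ≤ ·)).Perm (r :: S.sort (· ≤ ·)) :=
    (Finset.sort_perm_toList _ _).trans <|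
      (Finset.toList_insert hr).trans <| .cons r (Finset.sort_perm_toList _ _).symm
  rw [conjAvgOver, hperm.foldr_eq, List.foldr_cons, hfold]
  rfl

lemma norm_sub_conjAvgOver_insert_le (hH : ∀ j, IsStarProjection (H j))
    (hcomm : ∀ i j, Commute (H i) (H j)) {r : Fin n} {S : Finset (Fin n)} (hr : r ∉ S)
    (A : E →L[ℂ] E) :
    ‖A - conjAvgOver H (insert r S) A‖ ≤
      ‖A - conjAvgOver H S A‖ + ‖A - conjAvgOver H {r} A‖ := by
  rw [conjAvgOver_insert hH hcomm hr, conjAvgOver_singleton hH, add_comm]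
  set B := conjAvgOver H S A
  calc ‖A - pinching (H r) B‖ = ‖(A - pinching (H r) A) + pinching (H r) (A - B)‖ := by
        rw [pinching_sub, sub_add_sub_cancel]
    _ ≤ ‖A - pinching (H r) A‖ + ‖A - B‖ := by
        grw [norm_add_le, (hH r).norm_pinching_le]

lemma norm_sub_conjAvgOver_le_sum (hH : ∀ j, IsStarProjection (H j))
    (hcomm : ∀ i j, Commute (H i) (H j)) (S : Finset (Fin n)) (A : E →L[ℂ] E) :
    ‖A - conjAvgOver H S A‖ ≤ ∑ r ∈ S, ‖A - conjAvgOver H {r} A‖ := by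
  induction S using Finset.induction_on with
  | empty => simp [conjAvgOver]
  | insert r S hr ih =>
    rw [Finset.sum_insert hr, add_comm]
    exact (norm_sub_conjAvgOver_insert_le hH hcomm hr A).trans (add_le_add_left ih _)

end conjAvgOver

/-- For commuting orthogonal projections `Hᵣ` and any `r ∈ S`:
`‖A − E_S(A)‖ ≤ ‖A − E_{S∖{r}}(A)‖ + ‖A − E_{{r}}(A)‖`, and consequently
`‖A − E_S(A)‖ ≤ Σ_{r∈S} ‖A − E_{{r}}(A)‖ ≤ π Σ_{r∈S} ‖[Hᵣ, A]‖`. -/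
theorem norm_sub_conjAvgOver_le
    {n : ℕ} (H : Fin n → (E →L[ℂ] E))
    (hsa : ∀ j, IsSelfAdjoint (H j)) (hidem : ∀ j, H j * H j = H j)
    (hcomm : ∀ i j, H i * H j = H j * H i)
    (S : Finset (Fin n)) (A : E →L[ℂ] E) :
    (∀ r ∈ S, ‖A - conjAvgOver H S A‖ ≤
        ‖A - conjAvgOver H (S \ {r}) A‖ + ‖A - conjAvgOver H {r} A‖) ∧
    ‖A - conjAvgOver H S A‖ ≤ ∑ r ∈ S, ‖A - conjAvgOver H {r} A‖ ∧
    ∑ r ∈ S, ‖A - conjAvgOver H {r} A‖ ≤ Real.pi * ∑ r ∈ S, ‖H r * A - A * H r‖ := by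
  have hH : ∀ j, IsStarProjection (H j) := fun j => ⟨hidem j, hsa j⟩
  refine ⟨fun r hr => ?_, norm_sub_conjAvgOver_le_sum hH hcomm S A, ?_⟩
  · have h := norm_sub_conjAvgOver_insert_le hH hcomm (S.notMem_erase r) A
    rwa [Finset.insert_erase hr, ← Finset.sdiff_singleton_eq_erase] at h
  · rw [Finset.mul_sum]
    gcongr with r
    rw [conjAvgOver_singleton hH, (hH r).norm_sub_pinching]
    exact le_mul_of_one_le_left (norm_nonneg _) (by linarith [Real.pi_gt_three])
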